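/- arXiv:1410.4363 — 7 statements merged into one kernel-verified Lean document; each statement's English description precedes it below -/
import Mathlib

section
/- Let Q be a finite subgroup of Houghton's group H_n. Then the set S_Q = {s ∈ S : q(s) ≠ s for some q ∈ Q} of points of S not fixed by Q is finite. In particular, every element of finite order in H_n moves only finitely many points of S. -/
/-- `f : ℕ × Fin n → ℕ × Fin n` is eventually a translation with translation
vector `m : Fin n → ℤ`: on each ray `ℕ × {x}`, for all sufficiently large `i`,
`f` sends `(i, x)` to `(i + m x, x)`. -/
def EvTrans (n : ℕ) (f : ℕ × Fin n → ℕ × Fin n) (m : Fin n → ℤ) : Prop :=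
  ∀ x : Fin n, ∃ z : ℕ, ∀ i : ℕ, z ≤ i →
    (f (i, x)).2 = x ∧ ((f (i, x)).1 : ℤ) = (i : ℤ) + m x

/-- Houghton's group `H_n`: the subgroup of the symmetric group on
`S = ℕ × Fin n` consisting of the permutations that are eventually
translations on each ray. -/
def Houghton (n : ℕ) : Subgroup (Equiv.Perm (ℕ × Fin n)) where
  carrier := {f : Equiv.Perm (ℕ × Fin n) | ∃ m : Fin n → ℤ, EvTrans n (⇑f) m}
  one_mem' := ⟨0, fun x => ⟨0, fun i _ => by simp⟩⟩
  mul_mem' := by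
    rintro a b ⟨ma, hA⟩ ⟨mb, hB⟩
    refine ⟨ma + mb, fun x => ?_⟩
    obtain ⟨za, hza⟩ := hA x
    obtain ⟨zb, hzb⟩ := hB x
    refine ⟨max zb ((za : ℤ) - mb x).toNat, fun i hi => ?_⟩
    have hib : zb ≤ i := le_trans (le_max_left _ _) hi
    obtain ⟨h2, h1⟩ := hzb i hib
    have hbx : (⇑b) (i, x) = ((b (i, x)).1, x) := Prod.ext_iff.mpr ⟨rfl, h2⟩
    have hk : za ≤ (b (i, x)).1 := by
      have h3 : ((za : ℤ) - mb x) ≤ (i : ℤ) := by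
        calc ((za : ℤ) - mb x) ≤ (((za : ℤ) - mb x).toNat : ℤ) := Int.self_le_toNat _
          _ ≤ (i : ℤ) := by exact_mod_cast le_trans (le_max_right _ _) hi
      have h4 : (za : ℤ) ≤ ((b (i, x)).1 : ℤ) := by rw [h1]; linarith
      exact_mod_cast h4
    obtain ⟨h4, h5⟩ := hza (b (i, x)).1 hk
    constructor
    · show ((a * b) (i, x)).2 = x
      rw [Equiv.Perm.mul_apply, hbx]
      exact h4
    · show (((a * b) (i, x)).1 : ℤ) = (i : ℤ) + (ma + mb) x
      rw [Equiv.Perm.mul_apply, hbx, h5, h1, Pi.add_apply]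
      ring
  inv_mem' := by
    rintro a ⟨m, hm⟩
    refine ⟨-m, fun x => ?_⟩
    obtain ⟨z, hz⟩ := hm x
    refine ⟨((z : ℤ) + m x).toNat, fun i hi => ?_⟩
    have h1 : (z : ℤ) + m x ≤ (i : ℤ) :=
      le_trans (Int.self_le_toNat _) (by exact_mod_cast hi)
    have h0 : (0 : ℤ) ≤ (i : ℤ) - m x := by
      have hz0 : (0 : ℤ) ≤ (z : ℤ) := Int.natCast_nonneg z
      linarith
    set j := ((i : ℤ) - m x).toNat with hjdef
    have hj' : (j : ℤ) = (i : ℤ) - m x := Int.toNat_of_nonneg h0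
    have hjz : z ≤ j := by
      have : (z : ℤ) ≤ (j : ℤ) := by rw [hj']; linarith
      exact_mod_cast this
    obtain ⟨h2, h3⟩ := hz j hjz
    have hfst : (a (j, x)).1 = i := by
      have : ((a (j, x)).1 : ℤ) = (i : ℤ) := by rw [h3, hj']; ring
      exact_mod_cast this
    have hfix : (⇑a) (j, x) = (i, x) := Prod.ext_iff.mpr ⟨hfst, h2⟩
    have hinv : (⇑a⁻¹) (i, x) = (j, x) := by
      rw [← hfix]
      exact Equiv.symm_apply_apply a (j, x)
    constructor
    · rw [hinv]
    · rw [hinv]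
      show (j : ℤ) = (i : ℤ) + (-m) x
      rw [hj', Pi.neg_apply]
      ring

/-!
The translation vector of a Houghton element is additive under composition, so that of `g ^ k`
is `k • m`. If `g ^ k = 1` with `k > 0`, uniqueness of translation vectors forces `m = 0`, i.e.
`g` fixes every point far enough out on each of the finitely many rays; hence `g` moves only
finitely many points. A finite subgroup consists of finitely many elements of finite order, and
its non-fixed set is the union of theirs.
-/

theorem evTrans_id (n : ℕ) : EvTrans n id 0 :=
  fun _ => ⟨0, fun i _ => by simp⟩

namespace EvTrans

variable {n : ℕ} {f g : ℕ × Fin n → ℕ × Fin n} {a b m : Fin n → ℤ}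

theorem comp (hf : EvTrans n f a) (hg : EvTrans n g b) : EvTrans n (f ∘ g) (a + b) := by
  intro x
  obtain ⟨zf, hzf⟩ := hf x
  obtain ⟨zg, hzg⟩ := hg x
  refine ⟨max zg (zf + (b x).natAbs), fun i hi => ?_⟩
  obtain ⟨hg_ray, hg_shift⟩ := hzg i (le_of_max_le_left hi)
  have hgi : g (i, x) = ((g (i, x)).1, x) := Prod.ext rfl hg_ray
  obtain ⟨hf_ray, hf_shift⟩ := hzf (g (i, x)).1 (by omega)
  rw [Function.comp_apply, hgi]
  exact ⟨hf_ray, by rw [hf_shift, hg_shift, Pi.add_apply]; ring⟩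

theorem iterate (hf : EvTrans n f m) (k : ℕ) : EvTrans n f^[k] (k • m) := by
  induction k with
  | zero => simpa using evTrans_id n
  | succ k ih =>
    rw [Function.iterate_succ, succ_nsmul]
    exact ih.comp hf

theorem unique (ha : EvTrans n f a) (hb : EvTrans n f b) : a = b := by
  funext x
  obtain ⟨za, hza⟩ := ha x
  obtain ⟨zb, hzb⟩ := hb x
  have := (hza (max za zb) (le_max_left _ _)).2.symm.trans (hzb (max za zb) (le_max_right _ _)).2
  omega

theorem finite_setOf_apply_ne (hf : EvTrans n f 0) : {s | f s ≠ s}.Finite := by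
  choose z hz using hf
  refine ((Set.finite_Iio (Finset.univ.sup z)).prod Set.finite_univ).subset ?_
  rintro ⟨i, x⟩ hmoved
  by_contra hfar
  have hi : Finset.univ.sup z ≤ i := by simpa using hfar
  obtain ⟨hray, hshift⟩ := hz x i ((Finset.le_sup (Finset.mem_univ x)).trans hi)
  exact hmoved (Prod.ext (by simpa using hshift) hray)

end EvTrans

theorem Houghton.finite_setOf_apply_ne_of_isOfFinOrder {n : ℕ} {g : Equiv.Perm (ℕ × Fin n)}
    (hg : g ∈ Houghton n) (hfo : IsOfFinOrder g) : {s | g s ≠ s}.Finite := by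
  obtain ⟨m, hm⟩ := hg
  obtain ⟨k, hk, hgk⟩ := isOfFinOrder_iff_pow_eq_one.mp hfo
  have hmk : EvTrans n id (k • m) := by
    simpa [← Equiv.Perm.coe_pow, hgk] using hm.iterate k
  have hm0 : m = 0 := (smul_eq_zero.mp (hmk.unique (evTrans_id n))).resolve_left hk.ne'
  exact (hm0 ▸ hm).finite_setOf_apply_ne

theorem houghton_finite_subgroup_support_finite_general (n : ℕ)
    (Q : Subgroup (Equiv.Perm (ℕ × Fin n))) (hQ : Q ≤ Houghton n)
    (hfin : Finite Q) :
    {s : ℕ × Fin n | ∃ q ∈ Q, q s ≠ s}.Finite ∧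
      ∀ g ∈ Houghton n, IsOfFinOrder g → {s : ℕ × Fin n | g s ≠ s}.Finite := by
  refine ⟨?_, fun g hg => Houghton.finite_setOf_apply_ne_of_isOfFinOrder hg⟩
  have hunion : {s : ℕ × Fin n | ∃ q ∈ Q, q s ≠ s} =
      ⋃ q ∈ (Q : Set (Equiv.Perm (ℕ × Fin n))), {s | q s ≠ s} := by
    ext s
    simp
  rw [hunion]
  exact (Set.toFinite _).biUnion fun q hq =>
    Houghton.finite_setOf_apply_ne_of_isOfFinOrder (hQ hq)
      (Q.subtype.isOfFinOrder (isOfFinOrder_of_finite (⟨q, hq⟩ : Q)))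

/-- If `Q` is a finite subgroup of Houghton's group `H_n`,
then the set of points of `S = ℕ × Fin n` not fixed by `Q` is finite.
In particular, every element of finite order in `H_n` moves only finitely
many points of `S`. -/
theorem houghton_finite_subgroup_support_finite (n : ℕ) (hn : 1 ≤ n)
    (Q : Subgroup (Equiv.Perm (ℕ × Fin n))) (hQ : Q ≤ Houghton n)
    (hfin : Finite Q) :
    {s : ℕ × Fin n | ∃ q ∈ Q, q s ≠ s}.Finite ∧
      ∀ g ∈ Houghton n, IsOfFinOrder g → {s : ℕ × Fin n | g s ≠ s}.Finite :=
  houghton_finite_subgroup_support_finite_general n Q hQ hfin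
end

section
/- Let X be a set, let G be a group acting faithfully on X, and let H ≤ G. For x, y ∈ X write x ∼ y if the stabilizers H_x and H_y are conjugate subgroups of H, and suppose this equivalence relation on X has finitely many classes X_1,…,X_t. Assume that for every g ∈ G and every a ∈ {1,…,t} with g(X_a) = X_a, the permutation of X that agrees with g on X_a and fixes X ∖ X_a pointwise is again realized by an element of G. For each a let C_a = {c ∈ C_G(H) : c fixes X ∖ X_a pointwise}. Then every element of C_G(H) maps each X_a onto itself, elements of C_a and C_b commute for a ≠ b, and the multiplication map C_1 × C_2 × ⋯ × C_t → C_G(H), (c_1,…,c_t) ↦ c_1 c_2 ⋯ c_t, is a group isomorphism. -/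
/-- The stabilizers (in the subgroup `H`) of the points `x` and `y` are
conjugate subgroups of `H`: there is `h ∈ H` with `H_y = h H_x h⁻¹`. -/
def StabConj {G X : Type*} [Group G] [MulAction G X] (H : Subgroup G)
    (x y : X) : Prop :=
  ∃ h ∈ H, ∀ g ∈ H, g • y = y ↔ (h⁻¹ * g * h) • x = x

/-- The subgroup of elements of the centralizer of `H` that fix the
complement of `s` pointwise. -/
def fixComp {G X : Type*} [Group G] [MulAction G X] (H : Subgroup G)
    (s : Set X) : Subgroup G :=
  Subgroup.centralizer (H : Set G) ⊓ ⨅ x ∈ sᶜ, MulAction.stabilizer G x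

/-! If `c` centralizes `H`, then `H_{c x} = H_x`, so `c` preserves every class; likewise every
`h ∈ H` conjugates `H_x` to `H_{h x}` and so preserves every class. The groups `C_a` have
disjoint supports, hence commute, and the product `∏ c_b` acts on `X_a` as `c_a` alone. This
makes the multiplication map a homomorphism (`Subgroup.noncommPiCoprod`) that is injective by
faithfulness. For surjectivity, restrict `c ∈ C_G(H)` to each class by the hypothesis; the
restriction still commutes with `H` because `H` preserves the classes too. -/

open Function Subgroup

section Action

variable {G X : Type*} [Group G] [MulAction G X]

theorem commute_of_forall_notMem_smul_eq [FaithfulSMul G X] {s t : Set X} (hst : Disjoint s t)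
    {c d : G} (hc : ∀ x ∉ s, c • x = x) (hd : ∀ x ∉ t, d • x = x) : Commute c d := by
  have hdisj : (MulAction.toPermHom G X c).Disjoint (MulAction.toPermHom G X d) := fun x => by
    by_cases hx : x ∈ s
    · exact Or.inr (hd x (Set.disjoint_left.mp hst hx))
    · exact Or.inl (hc x hx)
  exact hdisj.commute.of_map MulAction.toPerm_injective

theorem commute_of_eqOn_of_forall_notMem_smul_eq [FaithfulSMul G X] {s : Set X} {c g h : G}
    (hch : Commute c h) (hh : ∀ x, h • x ∈ s ↔ x ∈ s) (hgc : ∀ x ∈ s, g • x = c • x)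
    (hg : ∀ x ∉ s, g • x = x) : Commute g h := by
  refine eq_of_smul_eq_smul fun x : X => ?_
  rw [mul_smul, mul_smul]
  by_cases hx : x ∈ s
  · rw [hgc _ ((hh x).mpr hx), hgc x hx, ← mul_smul, hch.eq, mul_smul]
  · rw [hg x hx, hg _ (mt (hh x).mp hx)]

theorem Subgroup.noncommPiCoprod_smul_of_forall_ne {ι : Type*} [Fintype ι] {K : ι → Subgroup G}
    {hcomm : Pairwise fun i j => ∀ x y : G, x ∈ K i → y ∈ K j → Commute x y}
    (u : ∀ i, K i) {a : ι} {x : X} (hx : ∀ b ≠ a, (u b : G) • x = x) :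
    noncommPiCoprod hcomm u • x = (u a : G) • x := by
  classical
  rw [noncommPiCoprod_apply, ← Finset.mul_noncommProd_erase _ (Finset.mem_univ a) _
    (fun i _ j _ hij => hcomm hij _ _ (u i).prop (u j).prop), mul_smul]
  congr 1
  exact noncommProd_mem (MulAction.stabilizer G x) _ fun b hb => hx b (Finset.ne_of_mem_erase hb)

end Action

theorem Subgroup.noncommPiCoprod_eq_prod_ofFn {G : Type*} [Group G] {t : ℕ}
    {K : Fin t → Subgroup G} {hcomm : Pairwise fun i j => ∀ x y : G, x ∈ K i → y ∈ K j → Commute x y}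
    (u : ∀ a, K a) : noncommPiCoprod hcomm u = (List.ofFn fun a => (u a : G)).prod := by
  simp [noncommPiCoprod_apply, Finset.noncommProd, Fin.univ_val_map]

theorem pairwise_disjoint_of_existsUnique {X ι : Type*} {P : ι → Set X}
    (hpart : ∀ x, ∃! a, x ∈ P a) : Pairwise (Disjoint on P) :=
  fun _ _ hab => Set.disjoint_left.mpr fun x ha hb => hab ((hpart x).unique ha hb)

section StabConj

variable {G X : Type*} [Group G] [MulAction G X] {H : Subgroup G}

theorem stabConj_smul_of_mem {h : G} (hh : h ∈ H) (x : X) : StabConj H x (h • x) :=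
  ⟨h, hh, fun g _ => by rw [mul_smul, mul_smul, inv_smul_eq_iff]⟩

theorem stabConj_smul_of_mem_centralizer {c : G} (hc : c ∈ centralizer (H : Set G)) (x : X) :
    StabConj H x (c • x) := by
  refine ⟨1, one_mem H, fun g hg => ?_⟩
  rw [inv_one, one_mul, mul_one, ← mul_smul, mem_centralizer_iff.mp hc g hg, mul_smul,
    smul_left_cancel_iff]

theorem mem_fixComp_iff {s : Set X} {c : G} :
    c ∈ fixComp H s ↔ c ∈ centralizer (H : Set G) ∧ ∀ x ∉ s, c • x = x := by
  simp [fixComp, mem_iInf, MulAction.mem_stabilizer_iff]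

theorem Commute.of_mem_fixComp [FaithfulSMul G X] {s t : Set X} (hst : Disjoint s t) {c d : G}
    (hc : c ∈ fixComp H s) (hd : d ∈ fixComp H t) : Commute c d :=
  commute_of_forall_notMem_smul_eq hst (mem_fixComp_iff.mp hc).2 (mem_fixComp_iff.mp hd).2

variable {ι : Type*} {P : ι → Set X} (hpart : ∀ x, ∃! a, x ∈ P a)
  (hclasses : ∀ x y, StabConj H x y → ∃ a, x ∈ P a ∧ y ∈ P a)
include hpart hclasses

theorem mem_iff_mem_of_stabConj {x y : X} (hxy : StabConj H x y) (a : ι) : y ∈ P a ↔ x ∈ P a := by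
  obtain ⟨b, hxb, hyb⟩ := hclasses x y hxy
  have hmem_iff : ∀ {z}, z ∈ P b → (z ∈ P a ↔ a = b) :=
    fun hz => ⟨fun hza => (hpart _).unique hza hz, fun hab => hab ▸ hz⟩
  rw [hmem_iff hxb, hmem_iff hyb]

theorem smul_mem_iff_of_mem {h : G} (hh : h ∈ H) (x : X) (a : ι) : h • x ∈ P a ↔ x ∈ P a :=
  mem_iff_mem_of_stabConj hpart hclasses (stabConj_smul_of_mem hh x) a

theorem smul_mem_iff_of_mem_centralizer {c : G} (hc : c ∈ centralizer (H : Set G)) (x : X)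
    (a : ι) : c • x ∈ P a ↔ x ∈ P a :=
  mem_iff_mem_of_stabConj hpart hclasses (stabConj_smul_of_mem_centralizer hc x) a

theorem image_smul_eq_of_mem_centralizer {c : G} (hc : c ∈ centralizer (H : Set G)) (a : ι) :
    (fun x => c • x) '' P a = P a := by
  ext y
  constructor
  · rintro ⟨x, hx, rfl⟩
    exact (smul_mem_iff_of_mem_centralizer hpart hclasses hc x a).mpr hx
  · intro hy
    refine ⟨c⁻¹ • y, ?_, smul_inv_smul c y⟩
    exact (smul_mem_iff_of_mem_centralizer hpart hclasses (inv_mem hc) y a).mpr hy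

theorem exists_mem_fixComp_eqOn [FaithfulSMul G X]
    (hrealize : ∀ (g : G) (a : ι), (fun x => g • x) '' P a = P a →
      ∃ g' : G, (∀ x ∈ P a, g' • x = g • x) ∧ ∀ x ∉ P a, g' • x = x)
    {c : G} (hc : c ∈ centralizer (H : Set G)) (a : ι) :
    ∃ g ∈ fixComp H (P a), ∀ x ∈ P a, g • x = c • x := by
  obtain ⟨g, hgc, hg⟩ := hrealize c a (image_smul_eq_of_mem_centralizer hpart hclasses hc a)
  refine ⟨g, mem_fixComp_iff.mpr ⟨mem_centralizer_iff.mpr fun h hh => ?_, hg⟩, hgc⟩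
  exact (commute_of_eqOn_of_forall_notMem_smul_eq (mem_centralizer_iff.mp hc h hh).symm
    (fun x => smul_mem_iff_of_mem hpart hclasses hh x a) hgc hg).symm

end StabConj

section Product

variable {G X ι : Type*} [Group G] [MulAction G X] [Fintype ι] {H : Subgroup G}
  {P : ι → Set X} {hcomm : Pairwise fun a b => ∀ c d : G,
    c ∈ fixComp H (P a) → d ∈ fixComp H (P b) → Commute c d}

theorem noncommPiCoprod_fixComp_mem_centralizer (u : ∀ a, fixComp H (P a)) :
    noncommPiCoprod hcomm u ∈ centralizer (H : Set G) :=
  (noncommPiCoprod_range.trans_le (iSup_le fun _ => inf_le_left) : _ ≤ centralizer (H : Set G))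
    ⟨u, rfl⟩

theorem noncommPiCoprod_fixComp_smul_of_mem (hdisj : Pairwise (Disjoint on P))
    (u : ∀ a, fixComp H (P a)) {a : ι} {x : X} (hx : x ∈ P a) : noncommPiCoprod hcomm u • x = (u a : G) • x :=
  noncommPiCoprod_smul_of_forall_ne u fun b hba =>
    (mem_fixComp_iff.mp (u b).prop).2 x (Set.disjoint_right.mp (hdisj hba) hx)

theorem noncommPiCoprod_fixComp_injective [FaithfulSMul G X]
    (hdisj : Pairwise (Disjoint on P)) : Injective (noncommPiCoprod hcomm) := by
  refine (injective_iff_map_eq_one _).mpr fun u hu => funext fun a => Subtype.ext ?_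
  refine eq_of_smul_eq_smul fun x : X => ?_
  rw [Pi.one_apply, OneMemClass.coe_one, one_smul]
  by_cases hx : x ∈ P a
  · rw [← noncommPiCoprod_fixComp_smul_of_mem (hcomm := hcomm) hdisj u hx, hu, one_smul]
  · exact (mem_fixComp_iff.mp (u a).prop).2 x hx

theorem exists_noncommPiCoprod_fixComp_eq [FaithfulSMul G X] (hpart : ∀ x, ∃! a, x ∈ P a)
    (hclasses : ∀ x y, StabConj H x y → ∃ a, x ∈ P a ∧ y ∈ P a)
    (hrealize : ∀ (g : G) (a : ι), (fun x => g • x) '' P a = P a →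
      ∃ g' : G, (∀ x ∈ P a, g' • x = g • x) ∧ ∀ x ∉ P a, g' • x = x)
    {c : G} (hc : c ∈ centralizer (H : Set G)) : ∃ u, noncommPiCoprod hcomm u = c := by
  choose g hg hgc using exists_mem_fixComp_eqOn hpart hclasses hrealize hc
  refine ⟨fun a => ⟨g a, hg a⟩, eq_of_smul_eq_smul fun x : X => ?_⟩
  obtain ⟨a, hx, -⟩ := hpart x
  rw [noncommPiCoprod_fixComp_smul_of_mem (pairwise_disjoint_of_existsUnique hpart) _ hx,
    hgc a x hx]

end Product

/-- Let `G` act faithfully on `X`, let `H ≤ G`, and suppose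
the equivalence relation "stabilizers in `H` are conjugate" has finitely many
classes `Xc 0, …, Xc (t-1)`.  Assume that for every `g ∈ G` and every class
`Xc a` with `g (Xc a) = Xc a`, the permutation agreeing with `g` on `Xc a` and
fixing the complement pointwise is realized by an element of `G`.  Then every
element of the centralizer `C_G(H)` maps each class onto itself, elements of
`C_a` and `C_b` commute for `a ≠ b`, and the multiplication map
`C_1 × ⋯ × C_t → C_G(H)` is a group isomorphism. -/
theorem centralizer_decomposes_as_product {G X : Type*} [Group G]
    [MulAction G X] [FaithfulSMul G X]
    (H : Subgroup G) (t : ℕ) (Xc : Fin t → Set X)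
    (hpart : ∀ x : X, ∃! a : Fin t, x ∈ Xc a)
    (hclasses : ∀ x y : X, StabConj H x y ↔ ∃ a : Fin t, x ∈ Xc a ∧ y ∈ Xc a)
    (hrealize : ∀ (g : G) (a : Fin t), (fun x => g • x) '' Xc a = Xc a →
      ∃ g' : G, (∀ x ∈ Xc a, g' • x = g • x) ∧ ∀ x ∉ Xc a, g' • x = x) :
    (∀ c ∈ Subgroup.centralizer (H : Set G), ∀ a : Fin t,
        (fun x => c • x) '' Xc a = Xc a) ∧
    (∀ a b : Fin t, a ≠ b → ∀ c ∈ fixComp H (Xc a), ∀ d ∈ fixComp H (Xc b),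
        Commute c d) ∧
    ∃ e : (∀ a : Fin t, ↥(fixComp H (Xc a))) ≃*
        ↥(Subgroup.centralizer (H : Set G)),
      ∀ f : ∀ a : Fin t, ↥(fixComp H (Xc a)),
        ((e f : G)) = (List.ofFn fun a => ((f a : G))).prod := by
  have hsameClass := fun x y => (hclasses x y).mp
  have hdisj := pairwise_disjoint_of_existsUnique hpart
  have hcomm : Pairwise fun a b => ∀ c d : G,
      c ∈ fixComp H (Xc a) → d ∈ fixComp H (Xc b) → Commute c d :=
    fun a b hab _ _ => Commute.of_mem_fixComp (hdisj hab)
  let Φ := (noncommPiCoprod hcomm).codRestrict _ noncommPiCoprod_fixComp_mem_centralizer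
  have hΦ : Bijective Φ := by
    refine ⟨fun u v huv => noncommPiCoprod_fixComp_injective hdisj (congrArg Subtype.val huv), ?_⟩
    rintro ⟨c, hc⟩
    obtain ⟨u, hu⟩ := exists_noncommPiCoprod_fixComp_eq hpart hsameClass hrealize hc
    exact ⟨u, Subtype.ext hu⟩
  exact ⟨fun c hc => image_smul_eq_of_mem_centralizer hpart hsameClass hc,
    fun a b hab c hc d hd => hcomm hab c d hc hd,
    MulEquiv.ofBijective Φ hΦ, noncommPiCoprod_eq_prod_ofFn⟩
end

section
/- Let Q be a group acting on a finite nonempty set X, and suppose that the stabilizers of any two points of X are conjugate subgroups of Q. Fix x₀ ∈ X and let Q₀ be the stabilizer of x₀. Then the index [Q : Q₀] is finite and divides |X|, and X is isomorphic as a Q-set to the disjoint union of r copies of the left coset space Q/Q₀, where r = |X| / [Q : Q₀]. -/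
/-!
A point `y` whose stabilizer is `g Q₀ g⁻¹` can be moved to `g⁻¹ • y`, whose stabilizer is exactly
`Q₀`. Choosing such a point `b ω` in every orbit `ω`, the map `(ω, qQ₀) ↦ q • b ω` is a
`Q`-equivariant bijection from `Ω × Q/Q₀` onto `X`, where `Ω` is the set of orbits. Counting then
gives `|X| = |Ω| [Q : Q₀]`.
-/

namespace MulAction

variable {Q X : Type*} [Group Q] [MulAction Q X]

theorem stabilizer_inv_smul_eq_of_conj {x y : X} {g : Q}
    (hg : ∀ q : Q, q • y = y ↔ (g⁻¹ * q * g) • x = x) :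
    stabilizer Q (g⁻¹ • y) = stabilizer Q x := by
  ext q
  rw [mem_stabilizer_iff, mem_stabilizer_iff, ← smul_left_cancel_iff g, smul_inv_smul, smul_smul,
    smul_smul, hg]
  group

theorem exists_orbit_section_stabilizer_eq {H : Subgroup Q}
    (h : ∀ x : X, ∃ g : Q, stabilizer Q (g • x) = H) :
    ∃ b : orbitRel.Quotient Q X → X,
      ∀ ω, Quotient.mk'' (b ω) = ω ∧ stabilizer Q (b ω) = H := by
  choose g hg using h
  refine ⟨fun ω => g ω.out • ω.out, fun ω => ⟨?_, hg ω.out⟩⟩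
  rw [← orbitRel.Quotient.mem_orbit, orbitRel.Quotient.orbit_eq_orbit_out ω Quotient.out_eq']
  exact mem_orbit _ _

section OrbitSection

variable {H : Subgroup Q} {b : orbitRel.Quotient Q X → X}

def smulOrbitSection (hstab : ∀ ω, stabilizer Q (b ω) = H) :
    orbitRel.Quotient Q X × Q ⧸ H → X :=
  fun p => Quotient.liftOn' p.2 (· • b p.1) fun q₁ q₂ hq => by
    rw [QuotientGroup.leftRel_apply, ← hstab, mem_stabilizer_iff, mul_smul, inv_smul_eq_iff] at hq
    exact hq.symm

theorem smulOrbitSection_mk (hstab : ∀ ω, stabilizer Q (b ω) = H) (ω) (q : Q) :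
    smulOrbitSection hstab (ω, (q : Q ⧸ H)) = q • b ω :=
  rfl

theorem smulOrbitSection_smul (hstab : ∀ ω, stabilizer Q (b ω) = H) (q : Q) (p) :
    smulOrbitSection hstab (p.1, q • p.2) = q • smulOrbitSection hstab p := by
  obtain ⟨ω, c⟩ := p
  induction c using QuotientGroup.induction_on with
  | H c => rw [Quotient.smul_mk, smulOrbitSection_mk, smulOrbitSection_mk, smul_eq_mul,
      mul_smul]

theorem smulOrbitSection_bijective (hmk : ∀ ω, Quotient.mk'' (b ω) = ω)
    (hstab : ∀ ω, stabilizer Q (b ω) = H) : Function.Bijective (smulOrbitSection hstab) := by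
  constructor
  · rintro ⟨ω₁, c₁⟩ ⟨ω₂, c₂⟩ heq
    induction c₁ using QuotientGroup.induction_on with | H q₁ =>
    induction c₂ using QuotientGroup.induction_on with | H q₂ =>
    rw [smulOrbitSection_mk, smulOrbitSection_mk] at heq
    have hω : ω₁ = ω₂ := by
      rw [← hmk ω₁, ← hmk ω₂, Quotient.eq'', orbitRel_apply]
      exact ⟨q₁⁻¹ * q₂, show (q₁⁻¹ * q₂) • b ω₂ = b ω₁ by rw [mul_smul, ← heq, inv_smul_smul]⟩
    subst hω
    refine Prod.ext rfl (QuotientGroup.eq.mpr ?_)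
    rw [← hstab ω₁, mem_stabilizer_iff, mul_smul, ← heq, inv_smul_smul]
  · intro x
    have hx : x ∈ orbit Q (b (Quotient.mk'' x)) := by
      rw [← orbitRel.Quotient.orbit_eq_orbit_out _ hmk]
      exact orbitRel.Quotient.mem_orbit.mpr rfl
    obtain ⟨q, hq⟩ := hx
    exact ⟨(Quotient.mk'' x, (q : Q ⧸ H)), hq⟩

noncomputable def orbitSectionEquiv (hmk : ∀ ω, Quotient.mk'' (b ω) = ω)
    (hstab : ∀ ω, stabilizer Q (b ω) = H) : orbitRel.Quotient Q X × Q ⧸ H ≃ X :=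
  Equiv.ofBijective _ (smulOrbitSection_bijective hmk hstab)

theorem orbitSectionEquiv_symm_smul (hmk : ∀ ω, Quotient.mk'' (b ω) = ω)
    (hstab : ∀ ω, stabilizer Q (b ω) = H) (q : Q) (x : X) :
    (orbitSectionEquiv hmk hstab).symm (q • x) =
      (((orbitSectionEquiv hmk hstab).symm x).1, q • ((orbitSectionEquiv hmk hstab).symm x).2) := by
  rw [Equiv.symm_apply_eq]
  conv_lhs => rw [← (orbitSectionEquiv hmk hstab).apply_symm_apply x]
  exact (smulOrbitSection_smul hstab q _).symm

end OrbitSection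

end MulAction

theorem qset_decomposition_into_cosets_general {Q X : Type*} [Group Q] [MulAction Q X]
    [Fintype X]
    (hconj : ∀ x y : X, ∃ g : Q, ∀ q : Q, q • y = y ↔ (g⁻¹ * q * g) • x = x)
    (x₀ : X) :
    (MulAction.stabilizer Q x₀).index ≠ 0 ∧
    (MulAction.stabilizer Q x₀).index ∣ Fintype.card X ∧
    ∃ e : X ≃ Fin (Fintype.card X / (MulAction.stabilizer Q x₀).index) ×
        (Q ⧸ MulAction.stabilizer Q x₀),
      ∀ (q : Q) (x : X), e (q • x) = ((e x).1, q • (e x).2) := by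
  set Q₀ := MulAction.stabilizer Q x₀
  obtain ⟨b, hb⟩ := MulAction.exists_orbit_section_stabilizer_eq (H := Q₀) fun x =>
    let ⟨g, hg⟩ := hconj x₀ x
    ⟨g⁻¹, MulAction.stabilizer_inv_smul_eq_of_conj hg⟩
  choose hmk hstab using hb
  set Ω := MulAction.orbitRel.Quotient Q X
  set φ := MulAction.orbitSectionEquiv hmk hstab
  have : Nonempty Ω := ⟨Quotient.mk'' x₀⟩
  have : Finite (Ω × Q ⧸ Q₀) := Finite.of_equiv X φ.symm
  have : Finite (Q ⧸ Q₀) := Finite.prod_right Ω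
  have hindex := Q₀.index_ne_zero_of_finite
  have hcard : Fintype.card X = Nat.card Ω * Q₀.index := by
    rw [← Nat.card_eq_fintype_card, ← Nat.card_congr φ, Nat.card_prod, Subgroup.index]
  have hr : Fintype.card X / Q₀.index = Nat.card Ω := by
    rw [hcard, Nat.mul_div_cancel _ (Nat.pos_of_ne_zero hindex)]
  refine ⟨hindex, Dvd.intro_left _ hcard.symm,
    φ.symm.trans ((Finite.equivFinOfCardEq hr.symm).prodCongr (Equiv.refl _)), fun q x => ?_⟩
  simp only [Equiv.trans_apply, Equiv.prodCongr_apply, φ, MulAction.orbitSectionEquiv_symm_smul]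
  rfl

/-- Let `Q` act on a finite nonempty set `X` such that the
stabilizers of any two points are conjugate in `Q`.  Fix `x₀ ∈ X` and let
`Q₀` be its stabilizer.  Then the index `[Q : Q₀]` is finite and divides
`|X|`, and `X` is `Q`-equivariantly isomorphic to the disjoint union of
`r = |X| / [Q : Q₀]` copies of the coset space `Q/Q₀`. -/
theorem qset_decomposition_into_cosets {Q X : Type*} [Group Q] [MulAction Q X]
    [Fintype X] [Nonempty X]
    (hconj : ∀ x y : X, ∃ g : Q, ∀ q : Q, q • y = y ↔ (g⁻¹ * q * g) • x = x)
    (x₀ : X) :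
    (MulAction.stabilizer Q x₀).index ≠ 0 ∧
    (MulAction.stabilizer Q x₀).index ∣ Fintype.card X ∧
    ∃ e : X ≃ Fin (Fintype.card X / (MulAction.stabilizer Q x₀).index) ×
        (Q ⧸ MulAction.stabilizer Q x₀),
      ∀ (q : Q) (x : X), e (q • x) = ((e x).1, q • (e x).2) :=
  qset_decomposition_into_cosets_general hconj x₀
end

section
/- For every n ≥ 1 there exists an infinite sequence (Q_i)_{i ∈ ℕ} of subgroups of Houghton's group H_n such that each Q_i has order 2 and Q_i is not conjugate to Q_j in H_n whenever i ≠ j. Consequently, H_n has infinitely many conjugacy classes of subgroups isomorphic to the cyclic group of order 2 (so H_n is not quasi-O_Fin FP₀). -/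
/-
A permutation of `ℕ × Fin n` with finite support lies in `H_n`, and conjugation by a
permutation `h` maps the moved points of `σ` bijectively onto those of `h σ h⁻¹`, so it
preserves their number. Reversing the initial segment `{0, …, 2k - 1}` of one ray is an
involution in `H_n` with exactly `2k` moved points. A conjugacy between two subgroups of order
two conjugates their generators, so the subgroups generated by these involutions, `k ≥ 1`, are
pairwise non-conjugate, even in the full symmetric group.
-/

open MulAction Equiv Subgroup Function

theorem eq_of_zpowers_eq_of_orderOf_eq_two {G : Type*} [Group G] {a b : G}
    (hb : orderOf b = 2) (h : zpowers a = zpowers b) : a = b := by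
  classical
  have ha : a ≠ 1 := by
    rintro rfl
    rw [zpowers_one_eq_bot, eq_comm, zpowers_eq_bot] at h
    simp [h] at hb
  have hmem : a ∈ zpowers b := h ▸ mem_zpowers a
  rw [(orderOf_pos_iff.mp (by omega)).mem_zpowers_iff_mem_range_orderOf, hb] at hmem
  obtain ⟨k, hk, rfl⟩ := Finset.mem_image.mp hmem
  have : k < 2 := Finset.mem_range.mp hk
  interval_cases k <;> simp_all

namespace Equiv.Perm

variable {α β : Type*}

theorem ncard_movedBy_conj (σ h : Perm α) :
    (fixedBy α (h * σ * h⁻¹))ᶜ.ncard = (fixedBy α σ)ᶜ.ncard := by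
  rw [← smul_fixedBy, ← Set.smul_set_compl, Set.ncard_smul_set]

theorem movedBy_viaEmbedding (e : Perm β) (ι : β ↪ α) :
    (fixedBy α (e.viaEmbedding ι))ᶜ = ι '' (fixedBy β e)ᶜ := by
  ext a
  by_cases ha : a ∈ Set.range ι
  · obtain ⟨b, rfl⟩ := ha
    simp [viaEmbedding_apply, ι.injective.eq_iff]
  · have : a ∉ ι '' (fixedBy β e)ᶜ := fun h => ha (Set.image_subset_range _ _ h)
    simp [viaEmbedding_apply_of_notMem _ _ _ ha, this]

theorem ncard_movedBy_viaEmbedding (e : Perm β) (ι : β ↪ α) :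
    (fixedBy α (e.viaEmbedding ι))ᶜ.ncard = (fixedBy β e)ᶜ.ncard := by
  rw [movedBy_viaEmbedding, Set.ncard_image_of_injective _ ι.injective]

theorem orderOf_viaEmbedding (e : Perm β) (ι : β ↪ α) :
    orderOf (e.viaEmbedding ι) = orderOf e :=
  orderOf_injective (viaEmbeddingHom ι) (viaEmbeddingHom_injective ι) e

end Equiv.Perm

theorem Fin.fixedBy_revPerm_two_mul (k : ℕ) :
    fixedBy (Fin (2 * k)) (revPerm : Perm (Fin (2 * k))) = ∅ := by
  ext i
  simp only [mem_fixedBy, Perm.smul_def, revPerm_apply, Fin.ext_iff, val_rev,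
    Set.mem_empty_iff_false, iff_false]
  omega

theorem Fin.orderOf_revPerm_two_mul {k : ℕ} (hk : 0 < k) :
    orderOf (revPerm : Perm (Fin (2 * k))) = 2 := by
  refine orderOf_eq_prime (Equiv.ext fun i => rev_rev i) fun h => ?_
  have := fixedBy_revPerm_two_mul k
  rw [h, fixedBy_one_eq_univ, Set.univ_eq_empty_iff] at this
  exact this.false ⟨0, by omega⟩

namespace Houghton

variable {n : ℕ}

theorem mem_of_finite_movedBy {σ : Perm (ℕ × Fin n)}
    (hσ : (fixedBy (ℕ × Fin n) σ)ᶜ.Finite) : σ ∈ Houghton n := by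
  obtain ⟨z, hz⟩ := (hσ.image Prod.fst).bddAbove
  refine ⟨0, fun x => ⟨z + 1, fun i hi => ?_⟩⟩
  have hfix : σ (i, x) = (i, x) := by
    by_contra hne
    have := hz ⟨(i, x), hne, rfl⟩
    omega
  simp [hfix]

noncomputable def rayReversal (x : Fin n) (k : ℕ) : Perm (ℕ × Fin n) :=
  (Fin.revPerm : Perm (Fin (2 * k))).viaEmbedding
    (Fin.valEmbedding.trans (Embedding.sectL ℕ x))

theorem ncard_movedBy_rayReversal (x : Fin n) (k : ℕ) :
    (fixedBy (ℕ × Fin n) (rayReversal x k))ᶜ.ncard = 2 * k := by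
  rw [rayReversal, Perm.ncard_movedBy_viaEmbedding, Fin.fixedBy_revPerm_two_mul, Set.compl_empty,
    Set.ncard_univ, Nat.card_fin]

theorem orderOf_rayReversal (x : Fin n) {k : ℕ} (hk : 0 < k) :
    orderOf (rayReversal x k) = 2 := by
  rw [rayReversal, Perm.orderOf_viaEmbedding, Fin.orderOf_revPerm_two_mul hk]

theorem rayReversal_mem (x : Fin n) (k : ℕ) : rayReversal x k ∈ Houghton n := by
  apply mem_of_finite_movedBy
  rw [rayReversal, Perm.movedBy_viaEmbedding]
  exact (Set.toFinite _).image _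

end Houghton

/-- For every `n ≥ 1` there is an infinite sequence
`(Q_i)_{i ∈ ℕ}` of subgroups of Houghton's group `H_n`, each of order `2`,
no two of which are conjugate in `H_n`.  Hence `H_n` has infinitely many
conjugacy classes of subgroups isomorphic to the cyclic group of order `2`
(so `H_n` is not quasi-`O_Fin FP₀`). -/
theorem houghton_infinitely_many_conjugacy_classes_of_C2 (n : ℕ)
    (hn : 1 ≤ n) :
    ∃ Q : ℕ → Subgroup (Equiv.Perm (ℕ × Fin n)),
      (∀ i, Q i ≤ Houghton n) ∧ (∀ i, Nat.card (Q i) = 2) ∧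
      ∀ i j, i ≠ j → ∀ h ∈ Houghton n,
        Subgroup.map (MulAut.conj h).toMonoidHom (Q i) ≠ Q j := by
  let σ : ℕ → Perm (ℕ × Fin n) := fun i => Houghton.rayReversal ⟨0, hn⟩ (i + 1)
  have horder : ∀ i, orderOf (σ i) = 2 := fun i => Houghton.orderOf_rayReversal _ i.succ_pos
  refine ⟨fun i => zpowers (σ i), fun i => zpowers_le.mpr (Houghton.rayReversal_mem _ _),
    fun i => by rw [Nat.card_zpowers, horder], fun i j hij h _ hQ => hij ?_⟩
  rw [MonoidHom.map_zpowers] at hQ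
  have hσ : h * σ i * h⁻¹ = σ j := eq_of_zpowers_eq_of_orderOf_eq_two (horder j) hQ
  have hcard := congrArg (fun τ => (fixedBy (ℕ × Fin n) τ)ᶜ.ncard) hσ
  simp only [Perm.ncard_movedBy_conj, σ, Houghton.ncard_movedBy_rayReversal] at hcard
  omega
end

section
/- Let Q be an infinite subgroup of Houghton's group H_n. Then there is no injective eventually-translation map α ∈ 𝓜 with q ∘ α = α for all q ∈ Q; that is, the fixed-point set 𝓜^Q is empty. -/
/-- The monoid `𝓜` of injective maps `S → S` that are eventually
translations. -/
def HMonoid (n : ℕ) : Set ((ℕ × Fin n) → (ℕ × Fin n)) :=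
  {α | Function.Injective α ∧ ∃ m : Fin n → ℤ, EvTrans n α m}

/-! A map `α ∈ 𝓜` is eventually a translation on each of the finitely many rays, so its range
is cofinite. If `q ∘ α = α` for all `q ∈ Q`, every `q` fixes that range pointwise, hence is
determined by its restriction to the finite complement, which it permutes; so `Q` is finite. -/

theorem EvTrans.finite_compl_range {n : ℕ} {f : ℕ × Fin n → ℕ × Fin n} {m : Fin n → ℤ}
    (hf : EvTrans n f m) : (Set.range f)ᶜ.Finite := by
  choose z hz using hf
  let N := Finset.univ.sup fun x => (z x + m x).toNat
  have mem_range : ∀ j x, N ≤ j → (j, x) ∈ Set.range f := by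
    intro j x hj
    have hN : (z x + m x).toNat ≤ N :=
      Finset.le_sup (f := fun x => (z x + m x).toNat) (Finset.mem_univ x)
    obtain ⟨hx, hi⟩ := hz x (j - m x).toNat (by omega)
    exact ⟨((j - m x).toNat, x), Prod.ext (by omega) hx⟩
  refine ((Set.finite_Iio N).prod Set.finite_univ).subset fun p hp => ?_
  exact ⟨not_le.mp fun h => hp (mem_range p.1 p.2 h), trivial⟩

theorem Equiv.Perm.finite_fixingSubgroup {α : Type*} {s : Set α} (hs : sᶜ.Finite) :
    Finite (fixingSubgroup (Perm α) s) := by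
  have := hs.to_subtype
  have fixes : ∀ g ∈ fixingSubgroup (Perm α) s, ∀ a ∈ s, g a = a :=
    fun g hg => (mem_fixingSubgroup_iff _).mp hg
  have maps_compl : ∀ g ∈ fixingSubgroup (Perm α) s, ∀ a ∈ sᶜ, g a ∈ sᶜ :=
    fun g hg a ha hga => ha (g.injective (fixes g hg _ hga) ▸ hga)
  refine Finite.of_injective (fun g (a : ↥sᶜ) => (⟨g.1 a, maps_compl g g.2 a a.2⟩ : ↥sᶜ)) ?_
  intro g h hgh
  refine Subtype.ext (Equiv.ext fun a => ?_)
  by_cases ha : a ∈ s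
  · rw [fixes g g.2 a ha, fixes h h.2 a ha]
  · exact congrArg Subtype.val (congrFun hgh ⟨a, ha⟩)

theorem houghton_monoid_fixed_points_empty_of_infinite_general (n : ℕ)
    (Q : Subgroup (Equiv.Perm (ℕ × Fin n)))
    (hinf : Infinite Q) :
    ¬ ∃ α ∈ HMonoid n, ∀ q ∈ Q, ⇑q ∘ α = α := by
  rintro ⟨α, ⟨-, m, hα⟩, hfix⟩
  have hQ : Q ≤ fixingSubgroup _ (Set.range α) := by
    rintro q hq ⟨_, t, rfl⟩
    exact congrFun (hfix q hq) t
  have := Equiv.Perm.finite_fixingSubgroup hα.finite_compl_range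
  have : Finite Q := Finite.of_injective _ (Subgroup.inclusion_injective hQ)
  exact not_finite Q

/-- If `Q` is an infinite subgroup of Houghton's group
`H_n`, then there is no injective eventually-translation map `α ∈ 𝓜` with
`q ∘ α = α` for all `q ∈ Q`; i.e. the fixed-point set `𝓜^Q` is empty. -/
theorem houghton_monoid_fixed_points_empty_of_infinite (n : ℕ) (hn : 1 ≤ n)
    (Q : Subgroup (Equiv.Perm (ℕ × Fin n))) (hQ : Q ≤ Houghton n)
    (hinf : Infinite Q) :
    ¬ ∃ α ∈ HMonoid n, ∀ q ∈ Q, ⇑q ∘ α = α :=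
  houghton_monoid_fixed_points_empty_of_infinite_general n Q hinf
end

section
/- Let G₁ and G₂ be groups, let π₁ and π₂ denote the projection homomorphisms from G₁ × G₂ to its factors, and let L be a finite subgroup of G₁ × G₂. Then the normalizer N_{G₁×G₂}(L) is contained in N_{G₁}(π₁(L)) × N_{G₂}(π₂(L)) and has finite index in it. -/
/-!
If `k` normalizes both projections of `L`, then conjugation by `k` maps `L` into the finite
group `M = π₁(L) × π₂(L)`, so the conjugates of `L` by `N_{G₁}(π₁(L)) × N_{G₂}(π₂(L))` are
among the finitely many subgroups of `M`. By orbit–stabilizer, the stabilizer `N_{G₁×G₂}(L)`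
of `L` has finite index.
-/

open Pointwise

namespace Subgroup

variable {G : Type*} [Group G]

theorem finite_setOf_le (M : Subgroup G) [Finite M] : {H : Subgroup G | H ≤ M}.Finite :=
  (Set.toFinite (M : Set G)).finite_subsets.preimage SetLike.coe_injective.injOn

theorem relIndex_ne_zero_of_finite_image {X : Type*} {H K : Subgroup G} (f : G → X)
    (hf : ∀ a b, f a = f b ↔ a⁻¹ * b ∈ H) (hK : (f '' K).Finite) : H.relIndex K ≠ 0 := by
  let F : K ⧸ H.subgroupOf K → f '' K :=
    Quotient.lift (fun k => ⟨f k, k, k.2, rfl⟩) fun a b hab =>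
      Subtype.ext ((hf a b).2 (mem_subgroupOf.1 (QuotientGroup.leftRel_apply.1 hab)))
  have hF : F.Injective := by
    rintro ⟨a⟩ ⟨b⟩ hab
    exact Quotient.sound
      (QuotientGroup.leftRel_apply.2 (mem_subgroupOf.2 ((hf a b).1 (congrArg Subtype.val hab))))
  have := hK.to_subtype
  have := Finite.of_injective F hF
  exact index_ne_zero_of_finite

theorem relIndex_normalizer_ne_zero_of_le_finite {L M K : Subgroup G} [Finite M] (hLM : L ≤ M)
    (hK : K ≤ normalizer (M : Set G)) : (normalizer (L : Set G)).relIndex K ≠ 0 := by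
  refine relIndex_ne_zero_of_finite_image (fun g => ConjAct.toConjAct g • L) (fun a b => ?_) ?_
  · rw [← conjAct_pointwise_smul_iff, map_mul, map_inv, mul_smul, inv_smul_eq_iff, eq_comm]
  · refine M.finite_setOf_le.subset ?_
    rintro _ ⟨k, hk, rfl⟩
    calc ConjAct.toConjAct k • L ≤ ConjAct.toConjAct k • M :=
          pointwise_smul_le_pointwise_smul_iff.2 hLM
      _ = M := conjAct_pointwise_smul_eq_self (hK hk)

variable {G₁ G₂ : Type*} [Group G₁] [Group G₂]

theorem prod_normalizer_le_normalizer_prod (H₁ : Subgroup G₁) (H₂ : Subgroup G₂) :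
    (normalizer (H₁ : Set G₁)).prod (normalizer (H₂ : Set G₂)) ≤
      normalizer ((H₁.prod H₂ : Subgroup (G₁ × G₂)) : Set (G₁ × G₂)) := by
  intro g hg
  rw [mem_prod, mem_normalizer_iff, mem_normalizer_iff] at hg
  rw [mem_normalizer_iff]
  intro h
  simp only [mem_prod, Prod.fst_mul, Prod.snd_mul, Prod.fst_inv, Prod.snd_inv]
  exact and_congr (hg.1 h.1) (hg.2 h.2)

theorem normalizer_le_prod_normalizer_map (L : Subgroup (G₁ × G₂)) :
    normalizer (L : Set (G₁ × G₂)) ≤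
      (normalizer ((L.map (MonoidHom.fst G₁ G₂) : Subgroup G₁) : Set G₁)).prod
        (normalizer ((L.map (MonoidHom.snd G₁ G₂) : Subgroup G₂) : Set G₂)) :=
  fun g hg => ⟨le_normalizer_map _ ⟨g, hg, rfl⟩, le_normalizer_map _ ⟨g, hg, rfl⟩⟩

end Subgroup

/-- If `L` is a finite subgroup of a direct product
`G₁ × G₂`, then the normalizer `N_{G₁×G₂}(L)` is contained in
`N_{G₁}(π₁(L)) × N_{G₂}(π₂(L))` and has finite index in it. -/
theorem normalizer_finite_index_in_product_of_normalizers
    {G₁ G₂ : Type*} [Group G₁] [Group G₂] (L : Subgroup (G₁ × G₂))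
    (hL : Finite L) :
    Subgroup.normalizer (L : Set (G₁ × G₂)) ≤
      ((Subgroup.normalizer ((L.map (MonoidHom.fst G₁ G₂) : Subgroup G₁) : Set G₁)).prod
        (Subgroup.normalizer ((L.map (MonoidHom.snd G₁ G₂) : Subgroup G₂) : Set G₂))) ∧
    (Subgroup.normalizer (L : Set (G₁ × G₂))).relIndex
      ((Subgroup.normalizer ((L.map (MonoidHom.fst G₁ G₂) : Subgroup G₁) : Set G₁)).prod
        (Subgroup.normalizer ((L.map (MonoidHom.snd G₁ G₂) : Subgroup G₂) : Set G₂))) ≠ 0 := by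
  set π₁L := L.map (MonoidHom.fst G₁ G₂)
  set π₂L := L.map (MonoidHom.snd G₁ G₂)
  have := Finite.of_surjective _ ((MonoidHom.fst G₁ G₂).subgroupMap_surjective L)
  have := Finite.of_surjective _ ((MonoidHom.snd G₁ G₂).subgroupMap_surjective L)
  have : Finite (π₁L.prod π₂L) :=
    Finite.of_equiv _ (Subgroup.prodEquiv π₁L π₂L).symm.toEquiv
  exact ⟨Subgroup.normalizer_le_prod_normalizer_map L,
    Subgroup.relIndex_normalizer_ne_zero_of_le_finite (Subgroup.le_prod_iff.2 ⟨le_rfl, le_rfl⟩)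
      (Subgroup.prod_normalizer_le_normalizer_prod π₁L π₂L)⟩
end

section
/- Let π : G → Q be a surjective group homomorphism with finite kernel. If Q has only finitely many conjugacy classes of finite subgroups, then G has only finitely many conjugacy classes of finite subgroups. -/
private lemma preimage_finite_aux {G Q : Type*} [Group G] [Group Q] (π : G →* Q)
    (hsurj : Function.Surjective π) (hker : Finite π.ker)
    (B : Subgroup Q) (hB : (B : Set Q).Finite) : ((B.comap π : Subgroup G) : Set G).Finite := by
  have hkerset : (π.ker : Set G).Finite := Set.toFinite _
  have hfib : ∀ b : Q, (π ⁻¹' {b}).Finite := by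
    intro b
    obtain ⟨g, hg⟩ := hsurj b
    have hsub : π ⁻¹' {b} ⊆ (fun x => g * x) '' (π.ker : Set G) := by
      intro x hx
      refine ⟨g⁻¹ * x, ?_, by group⟩
      have : π x = b := hx
      simp [SetLike.mem_coe, MonoidHom.mem_ker, map_mul, hg, this]
    exact (hkerset.image _).subset hsub
  have heq : ((B.comap π : Subgroup G) : Set G) = ⋃ b ∈ (B : Set Q), π ⁻¹' {b} := by
    ext x; simp [Subgroup.mem_comap]
  rw [heq]
  exact hB.biUnion fun b _ => hfib b

private lemma subgroups_le_finite {G : Type*} [Group G] (P : Subgroup G)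
    (hP : (P : Set G).Finite) : {H : Subgroup G | H ≤ P}.Finite := by
  have himg : (fun H : Subgroup G => (H : Set G)) '' {H | H ≤ P} ⊆ {t | t ⊆ (P : Set G)} := by
    rintro t ⟨H, hH, rfl⟩
    exact hH
  exact Set.Finite.of_finite_image (hP.finite_subsets.subset himg)
    (fun H _ H' _ h => SetLike.coe_injective h)

/-- Let `π : G → Q` be a surjective group homomorphism with
finite kernel.  If `Q` has only finitely many conjugacy classes of finite
subgroups, then so does `G`. -/
theorem finitely_many_conj_classes_of_finite_subgroups_of_quotient
    {G Q : Type*} [Group G] [Group Q] (π : G →* Q)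
    (hsurj : Function.Surjective π) (hker : Finite π.ker)
    (hQ : ∃ s : Set (Subgroup Q), s.Finite ∧ ∀ K : Subgroup Q, Finite K →
      ∃ B ∈ s, ∃ q : Q, K = Subgroup.map (MulAut.conj q).toMonoidHom B) :
    ∃ s : Set (Subgroup G), s.Finite ∧ ∀ K : Subgroup G, Finite K →
      ∃ B ∈ s, ∃ g : G, K = Subgroup.map (MulAut.conj g).toMonoidHom B := by
  obtain ⟨s, hs, hsmem⟩ := hQ
  set s' : Set (Subgroup Q) := {B ∈ s | (B : Set Q).Finite} with hs'def
  refine ⟨⋃ B ∈ s', {H : Subgroup G | H ≤ B.comap π}, ?_, ?_⟩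
  · exact (hs.subset (Set.sep_subset _ _)).biUnion fun B hB =>
      subgroups_le_finite _ (preimage_finite_aux π hsurj hker B hB.2)
  · intro K hK
    have hKset : (K : Set G).Finite := Set.toFinite _
    have hmapK : Finite (K.map π) := by
      have h1 : ((K.map π : Subgroup Q) : Set Q).Finite := by
        rw [Subgroup.coe_map]; exact hKset.image π
      exact h1.to_subtype
    obtain ⟨B, hB, q, hq⟩ := hsmem (K.map π) hmapK
    have hBfin : (B : Set Q).Finite := by
      have h1 : ((K.map π : Subgroup Q) : Set Q).Finite := by
        rw [Subgroup.coe_map]; exact hKset.image π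
      rw [hq, Subgroup.coe_map] at h1
      exact (h1.preimage ((MulAut.conj q).injective.injOn)).subset
        (Set.subset_preimage_image _ _)
    obtain ⟨g, hg⟩ := hsurj q
    refine ⟨K.map (MulAut.conj g⁻¹).toMonoidHom, ?_, g, ?_⟩
    · refine Set.mem_biUnion (show B ∈ s' from ⟨hB, hBfin⟩) ?_
      rintro x ⟨k, hk, rfl⟩
      have hπk : π k ∈ K.map π := ⟨k, hk, rfl⟩
      rw [hq] at hπk
      obtain ⟨b, hb, hbeq⟩ := hπk
      have hπk' : π k = q * b * q⁻¹ := by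
        simpa [MulAut.conj_apply] using hbeq.symm
      have hc : π ((MulAut.conj g⁻¹).toMonoidHom k) = q⁻¹ * π k * q := by
        simp [MulAut.conj_apply, map_mul, map_inv, inv_inv, hg]
      rw [Subgroup.mem_comap, hc, hπk']
      have : q⁻¹ * (q * b * q⁻¹) * q = b := by group
      rw [this]; exact hb
    · rw [Subgroup.map_map]
      have hcomp : ((MulAut.conj g).toMonoidHom : G →* G).comp
          (MulAut.conj g⁻¹).toMonoidHom = MonoidHom.id G := by
        ext x
        simp only [MonoidHom.coe_comp, Function.comp_apply, MulEquiv.coe_toMonoidHom,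
          MulAut.conj_apply, MonoidHom.id_apply]
        group
      rw [hcomp, Subgroup.map_id]
end
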